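/- Let g : ℝ³ → ℝ³ be a bounded continuous function and let x : [0,∞) → ℝ³ range over a family of bounded continuous functions. Consider the response network y₁' = -y₁ - 1.4 tanh(y₁) + 1.2 tanh(y₂) - 7 tanh(y₃) + λg₁(x(t)), y₂' = -y₂ + 1.1 tanh(y₁) + 2.8 tanh(y₃) + λg₂(x(t)), y₃' = -y₃ + 0.5 tanh(y₁) - 2 tanh(y₂) + 4 tanh(y₃) + λg₃(x(t)). Then there exists λ₀ > 0 such that for every nonzero λ with |λ| ≤ λ₀ the outputs of this network are uniformly ultimately bounded: there exists B₀ > 0, and for every γ > 0 there exists T(γ) > 0, such that any solution y(t) with ‖y(t₀)‖ ≤ γ at some t₀ ≥ 0 (for any admissible input x(·)) satisfies ‖y(t)‖ < B₀ for every t ≥ t₀ + T(γ). In particular, the conditions of the uniform ultimate boundedness theorem are fulfilled for the Lyapunov function V(u) = (1/2)(u₁² + u₂² + u₃²) with a(r) = b(r) = r²/2, c(r) = r, B = 19.2√3, and μ = 1/(9.6√3). -/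

import Mathlib

open Real RealInnerProductSpace

noncomputable section

local notation "E" => EuclideanSpace ℝ (Fin 3)

/-- The unforced 3-cell HNN vector field (the network (Bao et al.) with `k = 0.5`):
`u₁' = -u₁ - 1.4 tanh u₁ + 1.2 tanh u₂ - 7 tanh u₃`,
`u₂' = -u₂ + 1.1 tanh u₁ + 2.8 tanh u₃`,
`u₃' = -u₃ + 0.5 tanh u₁ - 2 tanh u₂ + 4 tanh u₃`. -/
def F₂ (u : E) : E :=
  WithLp.toLp 2 ![-(u 0) - 1.4 * Real.tanh (u 0) + 1.2 * Real.tanh (u 1) - 7 * Real.tanh (u 2),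
    -(u 1) + 1.1 * Real.tanh (u 0) + 2.8 * Real.tanh (u 2),
    -(u 2) + 0.5 * Real.tanh (u 0) - 2 * Real.tanh (u 1) + 4 * Real.tanh (u 2)]

/-- The response network: the unforced field plus the external input `λ g(xv)`. -/
def resp₂ (lam : ℝ) (g : E → E) (xv y : E) : E :=
  (WithLp.toLp 2 (fun i => F₂ y i + lam * g xv i) : E)

/- Auxiliary lemmas -/

lemma my_abs_tanh_le_one (x : ℝ) : |Real.tanh x| ≤ 1 := by
  rw [Real.tanh_eq_sinh_div_cosh, abs_div, abs_of_pos (Real.cosh_pos x),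
    div_le_one (Real.cosh_pos x)]
  nlinarith [Real.cosh_sq_sub_sinh_sq x, sq_abs (Real.sinh x), abs_nonneg (Real.sinh x),
    Real.cosh_pos x]

lemma my_norm_sq (u : E) : ‖u‖ ^ 2 = u 0 ^ 2 + u 1 ^ 2 + u 2 ^ 2 := by
  rw [← real_inner_self_eq_norm_sq]
  simp only [PiLp.inner_apply, Fin.sum_univ_three, RCLike.inner_apply, conj_trivial]
  ring

lemma my_abs_sum (u : E) : |u 0| + |u 1| + |u 2| ≤ Real.sqrt 3 * ‖u‖ := by
  have h3 : (0:ℝ) ≤ 3 := by norm_num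
  have h := my_norm_sq u
  have hn : 0 ≤ ‖u‖ := norm_nonneg u
  have hs : Real.sqrt 3 ^ 2 = 3 := Real.sq_sqrt h3
  have hs0 : 0 ≤ Real.sqrt 3 := Real.sqrt_nonneg 3
  nlinarith [sq_abs (u 0), sq_abs (u 1), sq_abs (u 2), abs_nonneg (u 0), abs_nonneg (u 1),
    abs_nonneg (u 2), sq_nonneg (|u 0| - |u 1|), sq_nonneg (|u 0| - |u 2|),
    sq_nonneg (|u 1| - |u 2|), sq_nonneg (Real.sqrt 3 * ‖u‖ - (|u 0| + |u 1| + |u 2|)),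
    mul_nonneg hs0 hn]

lemma my_mul_abs (a c M : ℝ) (h : |c| ≤ M) : a * c ≤ |a| * M :=
  le_trans (le_abs_self _) (by rw [abs_mul]; exact mul_le_mul_of_nonneg_left h (abs_nonneg a))

/-- The key dissipativity estimate for the unforced field. -/
lemma inner_F₂_le (u : E) : ⟪u, F₂ u⟫ ≤ -‖u‖ ^ 2 + 9.6 * Real.sqrt 3 * ‖u‖ := by
  have hi : ⟪u, F₂ u⟫ = u 0 * (-(u 0) - 1.4 * Real.tanh (u 0) + 1.2 * Real.tanh (u 1)
        - 7 * Real.tanh (u 2))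
      + u 1 * (-(u 1) + 1.1 * Real.tanh (u 0) + 2.8 * Real.tanh (u 2))
      + u 2 * (-(u 2) + 0.5 * Real.tanh (u 0) - 2 * Real.tanh (u 1) + 4 * Real.tanh (u 2)) := by
    simp [F₂, PiLp.inner_apply, Fin.sum_univ_three, RCLike.inner_apply, conj_trivial]
    ring
  have hn := my_norm_sq u
  have hsum := my_abs_sum u
  obtain ⟨a0, a0'⟩ := abs_le.mp (my_abs_tanh_le_one (u 0))
  obtain ⟨a1, a1'⟩ := abs_le.mp (my_abs_tanh_le_one (u 1))
  obtain ⟨a2, a2'⟩ := abs_le.mp (my_abs_tanh_le_one (u 2))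
  have h0 := abs_nonneg (u 0)
  have h1 := abs_nonneg (u 1)
  have h2 := abs_nonneg (u 2)
  have b0 : u 0 * (-1.4 * Real.tanh (u 0) + 1.2 * Real.tanh (u 1) - 7 * Real.tanh (u 2))
      ≤ |u 0| * 9.6 := my_mul_abs _ _ _ (abs_le.mpr ⟨by linarith, by linarith⟩)
  have b1 : u 1 * (1.1 * Real.tanh (u 0) + 2.8 * Real.tanh (u 2))
      ≤ |u 1| * 9.6 := my_mul_abs _ _ _ (abs_le.mpr ⟨by linarith, by linarith⟩)
  have b2 : u 2 * (0.5 * Real.tanh (u 0) - 2 * Real.tanh (u 1) + 4 * Real.tanh (u 2))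
      ≤ |u 2| * 9.6 := my_mul_abs _ _ _ (abs_le.mpr ⟨by linarith, by linarith⟩)
  have expand : u 0 * (-(u 0) - 1.4 * Real.tanh (u 0) + 1.2 * Real.tanh (u 1)
        - 7 * Real.tanh (u 2))
      + u 1 * (-(u 1) + 1.1 * Real.tanh (u 0) + 2.8 * Real.tanh (u 2))
      + u 2 * (-(u 2) + 0.5 * Real.tanh (u 0) - 2 * Real.tanh (u 1) + 4 * Real.tanh (u 2))
      = -(u 0 ^ 2 + u 1 ^ 2 + u 2 ^ 2)
        + (u 0 * (-1.4 * Real.tanh (u 0) + 1.2 * Real.tanh (u 1) - 7 * Real.tanh (u 2))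
          + u 1 * (1.1 * Real.tanh (u 0) + 2.8 * Real.tanh (u 2))
          + u 2 * (0.5 * Real.tanh (u 0) - 2 * Real.tanh (u 1) + 4 * Real.tanh (u 2))) := by
    ring
  rw [hi, expand, hn]
  linarith

lemma my_one_add_sq (k : ℝ) (h : 0 ≤ k) : 1 + k ^ 2 ≤ (k + 1) ^ 2 := by nlinarith

lemma resp₂_eq (lam : ℝ) (g : E → E) (xv y : E) : resp₂ lam g xv y = F₂ y + lam • g xv := by
  ext i; simp [resp₂]

/-- For the response network obtained from the 3-cell HNN
`(exresponse1)` (with `k = 0.5`) by the bounded continuous input `λ g(x(t))`, the conditions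
of the uniform ultimate boundedness theorem hold for `V(u) = ½(u₁²+u₂²+u₃²)`,
`a(r) = b(r) = r²/2`, `c(r) = r`, `B = 19.2√3`, `μ = 1/(9.6√3)`, and there is `λ₀ > 0` such
that for every nonzero `λ` with `|λ| ≤ λ₀` the outputs of the response network are
uniformly ultimately bounded. -/
theorem uniform_ultimate_boundedness_doubling_response
    (g : E → E) (hg_cont : Continuous g) (Mg : ℝ) (hg_bdd : ∀ v, ‖g v‖ ≤ Mg) :
    (∀ u : E, 19.2 * Real.sqrt 3 ≤ ‖u‖ → ⟪u, F₂ u⟫ ≤ -(‖u‖ ^ 2 / 2)) ∧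
    (∀ r : ℝ, 19.2 * Real.sqrt 3 ≤ r → 0 < r ∧ r ≤ 1 / (9.6 * Real.sqrt 3) * (r ^ 2 / 2)) ∧
    (∃ lam₀ > (0 : ℝ), ∀ lam : ℝ, lam ≠ 0 → |lam| ≤ lam₀ →
      ∃ B₀ > (0 : ℝ), ∀ γ > (0 : ℝ), ∃ T > (0 : ℝ),
        ∀ x : ℝ → E, Continuous x → (∃ Mx : ℝ, ∀ t, 0 ≤ t → ‖x t‖ ≤ Mx) →
          ∀ y : ℝ → E, (∀ t ∈ Set.Ici (0 : ℝ),
              HasDerivAt y (resp₂ lam g (x t) (y t)) t) →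
            ∀ t₀ : ℝ, 0 ≤ t₀ → ‖y t₀‖ ≤ γ →
              ∀ t, t₀ + T ≤ t → ‖y t‖ < B₀) := by
  have hs0 : 0 ≤ Real.sqrt 3 := Real.sqrt_nonneg 3
  have hs1 : 1 ≤ Real.sqrt 3 := by
    rw [show (1:ℝ) = Real.sqrt 1 by simp]
    exact Real.sqrt_le_sqrt (by norm_num)
  refine ⟨?_, ?_, ?_⟩
  · -- condition (ii): dissipativity on ‖u‖ ≥ B
    intro u hu
    have h := inner_F₂_le u
    have hn : 0 ≤ ‖u‖ := norm_nonneg u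
    nlinarith [mul_le_mul_of_nonneg_right hu hn]
  · -- the conditions on `b` and `c`
    intro r hr
    have hr0 : 0 < r := lt_of_lt_of_le (by nlinarith) hr
    refine ⟨hr0, ?_⟩
    have heq : (1 / (9.6 * Real.sqrt 3)) * (r ^ 2 / 2) = r ^ 2 / (19.2 * Real.sqrt 3) := by
      field_simp
      ring
    rw [heq, le_div_iff₀ (by positivity)]
    nlinarith
  · -- uniform ultimate boundedness of the response
    have hMg : 0 ≤ Mg := le_trans (norm_nonneg _) (hg_bdd 0)
    have hMg1 : (0:ℝ) < Mg + 1 := by linarith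
    refine ⟨(Mg + 1)⁻¹, by positivity, fun lam _ hlam => ?_⟩
    set k : ℝ := 9.6 * Real.sqrt 3 + 1 with hk
    have hkpos : 0 < k := by positivity
    refine ⟨k + 1, by positivity, fun γ hγ => ?_⟩
    have hγ1 : (0:ℝ) < γ + 1 := by linarith
    have hlog : 0 ≤ Real.log (γ + 1) := Real.log_nonneg (by linarith)
    refine ⟨2 * Real.log (γ + 1) + 1, by positivity, fun x hx hxb y hy t₀ ht₀ hy₀ t ht => ?_⟩
    set T : ℝ := 2 * Real.log (γ + 1) + 1 with hT
    have hTpos : 0 < T := by positivity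
    have htt : t₀ ≤ t := by linarith
    -- key dissipativity estimate for the forced field
    have hkey : ∀ s : ℝ, 0 ≤ s → ⟪y s, resp₂ lam g (x s) (y s)⟫ ≤ -‖y s‖ ^ 2 + k * ‖y s‖ := by
      intro s hs
      have h1 : ⟪y s, resp₂ lam g (x s) (y s)⟫
          = ⟪y s, F₂ (y s)⟫ + lam * ⟪y s, g (x s)⟫ := by
        rw [resp₂_eq, inner_add_right, real_inner_smul_right]
      have h2 : lam * ⟪y s, g (x s)⟫ ≤ ‖y s‖ := by
        have hA : |lam * ⟪y s, g (x s)⟫| ≤ (Mg + 1)⁻¹ * (‖y s‖ * Mg) := by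
          rw [abs_mul]
          refine mul_le_mul hlam ?_ (abs_nonneg _) (by positivity)
          exact le_trans (abs_real_inner_le_norm _ _)
            (mul_le_mul_of_nonneg_left (hg_bdd _) (norm_nonneg _))
        have hB : (Mg + 1)⁻¹ * (‖y s‖ * Mg) ≤ ‖y s‖ := by
          rw [inv_mul_le_iff₀ hMg1]
          nlinarith [norm_nonneg (y s)]
        exact le_trans (le_abs_self _) (le_trans hA hB)
      have h3 := inner_F₂_le (y s)
      rw [h1, hk]; nlinarith
    -- the squared norm of the solution and its derivative
    set f : ℝ → ℝ := fun s => ‖y s‖ ^ 2 with hf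
    set f' : ℝ → ℝ := fun s => 2 * ⟪y s, resp₂ lam g (x s) (y s)⟫ with hf'
    have hfd : ∀ s : ℝ, 0 ≤ s → HasDerivAt f (f' s) s := by
      intro s hs
      have h := HasDerivAt.inner ℝ (hy s hs) (hy s hs)
      simp only [real_inner_self_eq_norm_sq] at h
      refine h.congr_deriv ?_
      simp only [hf']
      linarith [real_inner_comm (y s) (resp₂ lam g (x s) (y s))]
    have hcont : ContinuousOn f (Set.Icc t₀ t) := fun s hs =>
      ((hfd s (le_trans ht₀ hs.1)).continuousAt).continuousWithinAt
    have hslope : ∀ s ∈ Set.Ico t₀ t, ∀ r, f' s < r →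
        ∃ᶠ z in nhdsWithin s (Set.Ioi s), (z - s)⁻¹ * (f z - f s) < r := by
      intro s hs r hr
      have h := ((hfd s (le_trans ht₀ hs.1)).hasDerivWithinAt
        (s := Set.Ici s)).liminf_right_slope_le hr
      refine h.mono fun z hz => ?_
      rwa [slope_def_field, div_eq_inv_mul] at hz
    have hbound : ∀ s ∈ Set.Ico t₀ t, f' s ≤ (-1) * f s + k ^ 2 := by
      intro s hs
      have h := hkey s (le_trans ht₀ hs.1)
      have hn := norm_nonneg (y s)
      simp only [hf', hf]
      nlinarith [sq_nonneg (‖y s‖ - k)]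
    have ha : f t₀ ≤ γ ^ 2 := by
      simp only [hf]
      exact pow_le_pow_left₀ (norm_nonneg _) hy₀ 2
    clear_value f f'
    -- Grönwall's inequality
    have hgr := le_gronwallBound_of_liminf_deriv_right_le hcont hslope ha hbound t
      ⟨htt, le_refl t⟩
    rw [gronwallBound_of_K_ne_0 (by norm_num : (-1:ℝ) ≠ 0)] at hgr
    -- estimate the Grönwall bound
    set τ : ℝ := t - t₀ with hτ
    have hτT : T ≤ τ := by simp only [hτ]; linarith
    have hexp : Real.exp (-1 * τ) ≤ Real.exp (-T) := by
      apply Real.exp_le_exp.mpr; linarith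
    have hexppos : 0 < Real.exp (-1 * τ) := Real.exp_pos _
    have hexpT : Real.exp T = (γ + 1) ^ 2 * Real.exp 1 := by
      rw [hT, two_mul, Real.exp_add, Real.exp_add, Real.exp_log hγ1]
      ring
    have hγe : γ ^ 2 * Real.exp (-T) < 1 := by
      rw [Real.exp_neg, hexpT, mul_inv_lt_iff₀ (by positivity)]
      nlinarith [Real.add_one_le_exp 1, sq_nonneg γ]
    have hft : f t < 1 + k ^ 2 := by
      have h1 : γ ^ 2 * Real.exp (-1 * τ) ≤ γ ^ 2 * Real.exp (-T) :=
        mul_le_mul_of_nonneg_left hexp (sq_nonneg γ)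
      calc f t ≤ γ ^ 2 * Real.exp (-1 * τ) + k ^ 2 / (-1) * (Real.exp (-1 * τ) - 1) := hgr
        _ = γ ^ 2 * Real.exp (-1 * τ) + (k ^ 2 - k ^ 2 * Real.exp (-1 * τ)) := by ring
        _ < 1 + k ^ 2 := by
            have h3 : 0 ≤ k ^ 2 * Real.exp (-1 * τ) := by positivity
            linarith
    have hB : f t < (k + 1) ^ 2 := lt_of_lt_of_le hft (my_one_add_sq k hkpos.le)
    have hB' : ‖y t‖ ^ 2 < (k + 1) ^ 2 := by simpa only [hf] using hB
    exact lt_of_pow_lt_pow_left₀ 2 (by positivity) hB'
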